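/- arXiv:2201.08194 — 2 statements merged into one kernel-verified Lean document; each statement's English description precedes it below -/
import Mathlib

section
/- For d_A = 2^k and d_B = 2^{N−k} with 2k < N, the quantity −ln((d_A + d_B)/(1 + d_A d_B)) is bounded below by k·ln 2 − 2^{−(N−2k)}, i.e., k ln 2 − 1/2^{N−2k} ≤ −ln((2^k + 2^{N−k})/(1 + 2^N)). -/
/-- for `d_A = 2^k`, `d_B = 2^{N−k}` with `2k < N`,
`k ln 2 − 1/2^{N−2k} ≤ −ln((2^k + 2^{N−k})/(1 + 2^N))`. -/
theorem renyi2_lower_bound_asymptotic (k N : ℕ) (hk : 0 < k) (hkN : 2 * k < N) :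
    (k : ℝ) * Real.log 2 - 1 / 2 ^ (N - 2 * k)
      ≤ -Real.log (((2 : ℝ) ^ k + 2 ^ (N - k)) / (1 + 2 ^ N)) := by
  obtain ⟨m, rfl⟩ : ∃ m, N = 2 * k + m := ⟨N - 2 * k, by omega⟩
  have hNk : 2 * k + m - k = k + m := by omega
  have hm2 : 2 * k + m - 2 * k = m := by omega
  rw [hNk, hm2]
  have hposA : (0:ℝ) < 2 ^ k + 2 ^ (k + m) := by positivity
  have hposB : (0:ℝ) < 1 + 2 ^ (2 * k + m) := by positivity
  rw [Real.log_div hposA.ne' hposB.ne']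
  have hA : (2:ℝ) ^ k + 2 ^ (k + m) = 2 ^ k * (1 + 2 ^ m) := by
    rw [pow_add]; ring
  have hlogA : Real.log ((2:ℝ) ^ k + 2 ^ (k + m))
      = k * Real.log 2 + Real.log (1 + 2 ^ m) := by
    rw [hA, Real.log_mul (by positivity) (by positivity), Real.log_pow]
  have hlogB : ((2 * k + m : ℕ) : ℝ) * Real.log 2 ≤ Real.log (1 + 2 ^ (2 * k + m)) := by
    calc ((2 * k + m : ℕ) : ℝ) * Real.log 2 = Real.log ((2:ℝ) ^ (2 * k + m)) := by
          rw [Real.log_pow]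
      _ ≤ _ := Real.log_le_log (by positivity) (by linarith)
  have hsmall : Real.log (1 + (2:ℝ) ^ m) ≤ m * Real.log 2 + 1 / 2 ^ m := by
    have h1 : (1:ℝ) + 2 ^ m = 2 ^ m * (1 + (2 ^ m)⁻¹) := by
      have : ((2:ℝ) ^ m) ≠ 0 := by positivity
      field_simp
      ring
    rw [h1, Real.log_mul (by positivity) (by positivity), Real.log_pow]
    have h2 := Real.log_le_sub_one_of_pos (show (0:ℝ) < 1 + (2 ^ m)⁻¹ by positivity)
    have h3 : ((2:ℝ) ^ m)⁻¹ = 1 / 2 ^ m := by rw [one_div]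
    linarith
  have hcast : ((2 * k + m : ℕ) : ℝ) = 2 * k + m := by push_cast; ring
  rw [hcast] at hlogB
  linarith
end

section
/- Let ρ_A and σ_A be density matrices on a 2^k-dimensional Hilbert space with trace distance T = T(ρ_A, σ_A). Then the change in purity satisfies |tr ρ_A² − tr σ_A²| ≤ 1 − (1 − T)² − T²/(2^k − 1). -/
open Matrix
open scoped ComplexOrder

/-- The trace (nuclear) norm of a matrix: `‖M‖₁ = tr √(MᴴM)`. -/
noncomputable def traceNorm {n : Type*} [Fintype n] [DecidableEq n] (M : Matrix n n ℂ) : ℝ :=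
  (((Matrix.isHermitian_conjTranspose_mul_self M).eigenvectorUnitary : Matrix n n ℂ) *
      diagonal (((↑) : ℝ → ℂ) ∘ Real.sqrt ∘ (Matrix.isHermitian_conjTranspose_mul_self M).eigenvalues) *
      (star (Matrix.isHermitian_conjTranspose_mul_self M).eigenvectorUnitary : Matrix n n ℂ)).trace.re

/-!
Diagonalize `ρ - σ = U diag(δ) U*` and let `p, q` be the diagonals of `ρ, σ` in the eigenbasis `U`:
they are probability vectors with `p - q = δ`. Hence `‖ρ - σ‖₁ = ∑ |pᵢ - qᵢ|`, and since `ρ - σ` is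
diagonal in that basis, `tr ρ² - tr σ² = tr ((ρ - σ)(ρ + σ)) = ∑ (pᵢ² - qᵢ²)`. This reduces the bound
to probability vectors on `d = 2^k` points. There, with `T = ½ ∑ |pᵢ - qᵢ|` and
`m = maxᵢ (pᵢ - qᵢ) ∈ [0, T]`,
`∑ pᵢ² - ∑ qᵢ² = 2 ∑ δᵢ pᵢ - ∑ δᵢ² ≤ 2m - m² - (2T - m)² / (d - 1) ≤ 2T - T² - T² / (d - 1)`,
the middle step being Cauchy–Schwarz on the `d - 1` coordinates other than the maximal one, whose
absolute values sum to `2T - m`.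
-/

namespace Matrix

variable {n R : Type*} [Fintype n] [DecidableEq n]

theorem trace_conjStarAlgAut [CommRing R] [StarRing R] (U : unitary (Matrix n n R))
    (A : Matrix n n R) : (Unitary.conjStarAlgAut R _ U A).trace = A.trace := by
  rw [Unitary.conjStarAlgAut_apply, trace_mul_cycle, Unitary.coe_star_mul_self, one_mul]

theorem trace_mul_self_sub_trace_mul_self_of_sub_eq_diagonal [CommRing R]
    {P Q : Matrix n n R} {d : n → R} (h : P - Q = diagonal d) :
    (P * P).trace - (Q * Q).trace = ∑ i, (P i i ^ 2 - Q i i ^ 2) := by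
  have hd : ∀ i, d i = P i i - Q i i := fun i => by simpa using (congrFun (congrFun h i) i).symm
  have : (P * P).trace - (Q * Q).trace = ((P - Q) * (P + Q)).trace := by
    rw [sub_mul, mul_add, mul_add, trace_sub, trace_add, trace_add, trace_mul_comm Q P]
    ring
  rw [this, h, trace, Finset.sum_congr rfl fun i _ => ?_]
  simp only [diag_apply, diagonal_mul, hd, add_apply]
  ring

theorem IsHermitian.trace_cfc {𝕜 : Type*} [RCLike 𝕜] {A : Matrix n n 𝕜} (hA : A.IsHermitian)
    (f : ℝ → ℝ) : (hA.cfc f).trace = ∑ i, (f (hA.eigenvalues i) : 𝕜) := by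
  rw [IsHermitian.cfc, trace_conjStarAlgAut, trace_diagonal]
  rfl

end Matrix

theorem traceNorm_eq_re_trace_cfc_sqrt {n : Type*} [Fintype n] [DecidableEq n]
    (M : Matrix n n ℂ) : traceNorm M = (cfc Real.sqrt (Mᴴ * M)).trace.re := by
  rw [(isHermitian_conjTranspose_mul_self M).cfc_eq]
  rfl

theorem traceNorm_of_isHermitian {n : Type*} [Fintype n] [DecidableEq n] {M : Matrix n n ℂ}
    (hM : M.IsHermitian) : traceNorm M = ∑ i, |hM.eigenvalues i| := by
  have hsqrt : cfc Real.sqrt (Mᴴ * M) = cfc (fun x : ℝ => |x|) M := by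
    rw [hM.eq, ← pow_two, ← cfc_pow_id (R := ℝ) M 2 hM.isSelfAdjoint, ← cfc_comp Real.sqrt _ M]
    exact cfc_congr fun x _ => Real.sqrt_sq_eq_abs x
  rw [traceNorm_eq_re_trace_cfc_sqrt, hsqrt, hM.cfc_eq, hM.trace_cfc, Complex.re_sum]
  simp

open Finset

section ProbabilityVectors

variable {n : Type*} [Fintype n]

theorem sum_max_zero_eq_half_sum_abs {x : n → ℝ} (hx : ∑ i, x i = 0) :
    ∑ i, max (x i) 0 = (∑ i, |x i|) / 2 := by
  have h : ∀ i, |x i| = 2 * max (x i) 0 - x i := fun i => by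
    linarith [max_zero_add_max_neg_zero_eq_abs_self (x i), max_zero_sub_max_neg_zero_eq_self (x i)]
  rw [sum_congr rfl fun i _ => h i, sum_sub_distrib, ← mul_sum, hx]
  ring

theorem sq_add_sq_sum_abs_erase_div_le_sum_sq [DecidableEq n] (x : n → ℝ) (i₀ : n) :
    x i₀ ^ 2 + (∑ i ∈ univ.erase i₀, |x i|) ^ 2 / ((Fintype.card n : ℝ) - 1) ≤ ∑ i, x i ^ 2 := by
  have hcard : ((univ.erase i₀).card : ℝ) = (Fintype.card n : ℝ) - 1 := by
    rw [card_erase_of_mem (mem_univ i₀), card_univ, Nat.cast_pred (Fintype.card_pos_iff.2 ⟨i₀⟩)]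
  have hcs : (∑ i ∈ univ.erase i₀, |x i|) ^ 2 / ((Fintype.card n : ℝ) - 1)
      ≤ ∑ i ∈ univ.erase i₀, x i ^ 2 := by
    refine div_le_of_le_mul₀ (hcard ▸ Nat.cast_nonneg _) (sum_nonneg fun i _ => sq_nonneg _) ?_
    simpa only [hcard, sq_abs, mul_comm] using
      sq_sum_le_card_mul_sum_sq (s := univ.erase i₀) (f := fun i => |x i|)
  rw [← add_sum_erase univ _ (mem_univ i₀)]
  linarith

theorem sum_sq_sub_sum_sq_le {p q : n → ℝ} (hp : ∀ i, 0 ≤ p i) (hq : ∀ i, 0 ≤ q i)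
    (hp1 : ∑ i, p i = 1) (hq1 : ∑ i, q i = 1) :
    ∑ i, p i ^ 2 - ∑ i, q i ^ 2 ≤ 1 - (1 - (∑ i, |p i - q i|) / 2) ^ 2
      - ((∑ i, |p i - q i|) / 2) ^ 2 / ((Fintype.card n : ℝ) - 1) := by
  classical
  set T := (∑ i, |p i - q i|) / 2
  set c : ℝ := (Fintype.card n : ℝ) - 1
  have hsum : ∑ i, (p i - q i) = 0 := by rw [sum_sub_distrib, hp1, hq1, sub_self]
  have hT : ∑ i, max (p i - q i) 0 = T := sum_max_zero_eq_half_sum_abs hsum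
  have hne : (univ : Finset n).Nonempty :=
    nonempty_of_sum_ne_zero (f := p) (by rw [hp1]; exact one_ne_zero)
  obtain ⟨i₀, -, hmax⟩ := exists_max_image univ (fun i => p i - q i) hne
  set m := p i₀ - q i₀
  have hm0 : 0 ≤ m := by
    obtain ⟨i, -, hi⟩ := exists_le_of_sum_le hne (f := 0) (g := fun i => p i - q i)
      (by simp [hsum])
    exact hi.trans (hmax i (mem_univ i))
  have hmT : m ≤ T := hT ▸ (le_max_left m 0).trans
    (single_le_sum (f := fun i => max (p i - q i) 0) (fun i _ => le_max_right _ _) (mem_univ i₀))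
  have hT1 : T ≤ 1 := hT ▸ hp1 ▸ sum_le_sum fun i _ => max_le (by linarith [hq i]) (hp i)
  have hc : 0 ≤ c := sub_nonneg.2 (Nat.one_le_cast.2 (Fintype.card_pos_iff.2 ⟨i₀⟩))
  have hlin : ∑ i, (p i - q i) * p i ≤ m := calc
    ∑ i, (p i - q i) * p i ≤ ∑ i, m * p i :=
      sum_le_sum fun i _ => mul_le_mul_of_nonneg_right (hmax i (mem_univ i)) (hp i)
    _ = m := by rw [← mul_sum, hp1, mul_one]
  have hrest : ∑ i ∈ univ.erase i₀, |p i - q i| = 2 * T - m := by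
    have := add_sum_erase univ (fun i => |p i - q i|) (mem_univ i₀)
    rw [abs_of_nonneg hm0] at this
    linarith [show 2 * T = ∑ i, |p i - q i| by simp only [T]; ring]
  have hsq : m ^ 2 + (2 * T - m) ^ 2 / c ≤ ∑ i, (p i - q i) ^ 2 :=
    hrest ▸ sq_add_sq_sum_abs_erase_div_le_sum_sq (fun i => p i - q i) i₀
  have hid : ∑ i, p i ^ 2 - ∑ i, q i ^ 2 = 2 * ∑ i, (p i - q i) * p i - ∑ i, (p i - q i) ^ 2 := by
    rw [mul_sum, ← sum_sub_distrib, ← sum_sub_distrib]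
    exact sum_congr rfl fun i _ => by ring
  have hdiv : T ^ 2 / c ≤ (2 * T - m) ^ 2 / c :=
    div_le_div_of_nonneg_right (by nlinarith) hc
  nlinarith [mul_nonneg (sub_nonneg.2 hmT) (by linarith : 0 ≤ 2 - T - m)]

theorem abs_sum_sq_sub_sum_sq_le {p q : n → ℝ} (hp : ∀ i, 0 ≤ p i) (hq : ∀ i, 0 ≤ q i)
    (hp1 : ∑ i, p i = 1) (hq1 : ∑ i, q i = 1) :
    |∑ i, p i ^ 2 - ∑ i, q i ^ 2| ≤ 1 - (1 - (∑ i, |p i - q i|) / 2) ^ 2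
      - ((∑ i, |p i - q i|) / 2) ^ 2 / ((Fintype.card n : ℝ) - 1) := by
  have hqp := sum_sq_sub_sum_sq_le hq hp hq1 hp1
  simp only [abs_sub_comm (q _)] at hqp
  exact abs_le.2 ⟨by linarith, sum_sq_sub_sum_sq_le hp hq hp1 hq1⟩

end ProbabilityVectors

namespace Matrix.IsHermitian

variable {n : Type*} [Fintype n] [DecidableEq n]

noncomputable def eigenbasisDiag {H : Matrix n n ℂ} (hH : H.IsHermitian) (A : Matrix n n ℂ) :
    n → ℝ :=
  fun i => (Unitary.conjStarAlgAut ℂ _ (star hH.eigenvectorUnitary) A i i).re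

theorem eigenbasisDiag_nonneg {H A : Matrix n n ℂ} (hH : H.IsHermitian) (hA : A.PosSemidef)
    (i : n) : 0 ≤ hH.eigenbasisDiag A i := by
  have hA' : (Unitary.conjStarAlgAut ℂ _ (star hH.eigenvectorUnitary) A).PosSemidef := by
    simpa [star_eq_conjTranspose] using hA.conjTranspose_mul_mul_same _
  exact (Complex.nonneg_iff.1 hA'.diag_nonneg).1

theorem sum_eigenbasisDiag {H : Matrix n n ℂ} (hH : H.IsHermitian) (A : Matrix n n ℂ) :
    ∑ i, hH.eigenbasisDiag A i = A.trace.re := by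
  simp only [eigenbasisDiag, ← Complex.re_sum]
  exact congrArg Complex.re (trace_conjStarAlgAut _ A)

theorem eigenbasisDiag_sub_eigenbasisDiag {ρ σ : Matrix n n ℂ} (hΔ : (ρ - σ).IsHermitian)
    (i : n) : hΔ.eigenbasisDiag ρ i - hΔ.eigenbasisDiag σ i = hΔ.eigenvalues i := by
  have h := congrArg (fun A => (A i i).re) hΔ.conjStarAlgAut_star_eigenvectorUnitary
  rw [map_sub] at h
  simpa [eigenbasisDiag] using h

theorem re_trace_mul_self_sub_re_trace_mul_self {ρ σ : Matrix n n ℂ}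
    (hΔ : (ρ - σ).IsHermitian) (hρ : ρ.IsHermitian) (hσ : σ.IsHermitian) :
    (ρ * ρ).trace.re - (σ * σ).trace.re =
      ∑ i, hΔ.eigenbasisDiag ρ i ^ 2 - ∑ i, hΔ.eigenbasisDiag σ i ^ 2 := by
  set φ := Unitary.conjStarAlgAut ℂ _ (star hΔ.eigenvectorUnitary)
  have hdiag : φ ρ - φ σ = diagonal (RCLike.ofReal ∘ hΔ.eigenvalues) := by
    rw [← map_sub]
    exact hΔ.conjStarAlgAut_star_eigenvectorUnitary
  have hre : ∀ {A : Matrix n n ℂ}, A.IsHermitian → ∀ i, (φ A i i ^ 2).re = (φ A i i).re ^ 2 :=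
    fun hA i => by
      rw [← IsHermitian.coe_re_apply_self (hA.isSelfAdjoint.map φ) i]
      norm_cast
  rw [← trace_conjStarAlgAut (star hΔ.eigenvectorUnitary) (ρ * ρ),
    ← trace_conjStarAlgAut (star hΔ.eigenvectorUnitary) (σ * σ), ← Complex.sub_re, map_mul,
    map_mul, trace_mul_self_sub_trace_mul_self_of_sub_eq_diagonal hdiag, Complex.re_sum,
    ← sum_sub_distrib]
  simp only [Complex.sub_re, hre hρ, hre hσ, eigenbasisDiag, φ]

theorem traceNorm_sub_eq_sum_abs {ρ σ : Matrix n n ℂ} (hΔ : (ρ - σ).IsHermitian) :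
    traceNorm (ρ - σ) = ∑ i, |hΔ.eigenbasisDiag ρ i - hΔ.eigenbasisDiag σ i| := by
  simp only [traceNorm_of_isHermitian hΔ, eigenbasisDiag_sub_eigenbasisDiag]

end Matrix.IsHermitian

theorem purity_continuity_bound_general (k : ℕ)
    (ρ σ : Matrix (Fin (2 ^ k)) (Fin (2 ^ k)) ℂ)
    (hρ : ρ.PosSemidef) (hρ1 : ρ.trace = 1) (hσ : σ.PosSemidef) (hσ1 : σ.trace = 1) :
    |((ρ * ρ).trace).re - ((σ * σ).trace).re|
      ≤ 1 - (1 - traceNorm (ρ - σ) / 2) ^ 2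
        - (traceNorm (ρ - σ) / 2) ^ 2 / (2 ^ k - 1) := by
  have hΔ : (ρ - σ).IsHermitian := hρ.1.sub hσ.1
  rw [hΔ.re_trace_mul_self_sub_re_trace_mul_self hρ.1 hσ.1, hΔ.traceNorm_sub_eq_sum_abs]
  simpa using abs_sum_sq_sub_sum_sq_le (hΔ.eigenbasisDiag_nonneg hρ) (hΔ.eigenbasisDiag_nonneg hσ)
    (by rw [hΔ.sum_eigenbasisDiag, hρ1, Complex.one_re])
    (by rw [hΔ.sum_eigenbasisDiag, hσ1, Complex.one_re])

/-- for density matrices `ρ_A, σ_A` on a `2^k`-dimensional Hilbert space with trace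
distance `T = ½‖ρ_A − σ_A‖₁`, the purity change satisfies
`|tr ρ_A² − tr σ_A²| ≤ 1 − (1 − T)² − T²/(2^k − 1)`. -/
theorem purity_continuity_bound (k : ℕ) (hk : 1 ≤ k)
    (ρ σ : Matrix (Fin (2 ^ k)) (Fin (2 ^ k)) ℂ)
    (hρ : ρ.PosSemidef) (hρ1 : ρ.trace = 1) (hσ : σ.PosSemidef) (hσ1 : σ.trace = 1) :
    |((ρ * ρ).trace).re - ((σ * σ).trace).re|
      ≤ 1 - (1 - traceNorm (ρ - σ) / 2) ^ 2
        - (traceNorm (ρ - σ) / 2) ^ 2 / (2 ^ k - 1) :=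
  purity_continuity_bound_general k ρ σ hρ hρ1 hσ hσ1
end
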